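/- Let $K$ be a kernel defined by $\mathcal{K}(u,v)$ with the bound $|\mathcal{K}(u,v)| \leq C 2^{-j} \min\{1,\ (2^{jm} |p(v)-p(u)|)^{-1/m}\} \chi_{[0,2^{j-1}]}(|v-u|)$ for all $u,v\in\mathbb{R}$, where $p$ is a fixed real polynomial of degree $l\geq 1$ in one variable with leading coefficient $c_l\neq 0$, and $m\geq 1$. Then for any $\delta\in(0,1]$ with $\delta/m < 1/l$, $\sup_u \int_{\mathbb{R}} |\mathcal{K}(u,v)|\,dv \leq C' 2^{-j\delta} |c_l|^{-\delta/m}$, with $C'$ independent of $j$ and of the lower-order coefficients of $p$. -/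

import Mathlib

/-!
Off the finitely many `v` with `p(v) = p(u)`, the bound `min {1, X^(-1/m)} ≤ X^(-δ/m)` turns the
kernel bound into `C 2^(-j) 2^(-jδ) |p(v) - p(u)|^(-δ/m)` on an interval of length `2^j`.
Factoring `p - p(u)` over `ℂ` gives `|p(v) - p(u)| ≥ |c_l| ∏ᵢ |v - Re zᵢ|`, and Hölder's inequality
with `l` equal exponents reduces the integral of `∏ᵢ |v - Re zᵢ|^(-ε)` to integrals of
`|v - x|^(-εl)`, each at most `2 L^(1-εl)/(1-εl)` on an interval of length `L` because `εl < 1`.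
This sublevel estimate depends on `p` only through `c_l`, and `L = 2^j` cancels the factor `2^(-j)`.
-/

open MeasureTheory Set Polynomial
open scoped ENNReal NNReal

theorem lintegral_Icc_rpow_neg_abs_sub_le_of_le {β x a b : ℝ} (hβ0 : 0 ≤ β) (hβ1 : β < 1)
    (hx : x ≤ a) (hab : a ≤ b) :
    ∫⁻ v in Icc a b, ENNReal.ofReal (|v - x| ^ (-β)) ≤
      ENNReal.ofReal ((b - a) ^ (1 - β) / (1 - β)) := by
  have hβ : -1 < -β := by linarith
  have hint : IntegrableOn (fun v => (v - a) ^ (-β)) (Ioc a b) := by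
    rw [← intervalIntegrable_iff_integrableOn_Ioc_of_le hab]
    simpa using
      (intervalIntegral.intervalIntegrable_rpow' hβ (a := a - a) (b := b - a)).comp_sub_right a
  have hnonneg : 0 ≤ᵐ[volume.restrict (Ioc a b)] fun v => (v - a) ^ (-β) :=
    (ae_restrict_iff' measurableSet_Ioc).mpr <| .of_forall fun v hv =>
      Real.rpow_nonneg (by linarith [hv.1]) _
  calc ∫⁻ v in Icc a b, ENNReal.ofReal (|v - x| ^ (-β))
      = ∫⁻ v in Ioc a b, ENNReal.ofReal (|v - x| ^ (-β)) := setLIntegral_congr Ioc_ae_eq_Icc.symm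
    _ ≤ ∫⁻ v in Ioc a b, ENNReal.ofReal ((v - a) ^ (-β)) := by
        refine setLIntegral_mono' measurableSet_Ioc fun v hv => ENNReal.ofReal_le_ofReal ?_
        refine Real.rpow_le_rpow_of_nonpos (by linarith [hv.1]) ?_ (by linarith)
        rw [abs_of_nonneg (by linarith [hv.1])]
        linarith
    _ = ENNReal.ofReal (∫ v in a..b, (v - a) ^ (-β)) := by
        rw [intervalIntegral.integral_of_le hab, ofReal_integral_eq_lintegral_ofReal hint hnonneg]
    _ = ENNReal.ofReal ((b - a) ^ (1 - β) / (1 - β)) := by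
        rw [intervalIntegral.integral_comp_sub_right (fun t => t ^ (-β)), sub_self,
          integral_rpow (Or.inl hβ), Real.zero_rpow (by linarith), neg_add_eq_sub, sub_zero]

theorem lintegral_Icc_rpow_neg_abs_sub_le_of_ge {β x a b : ℝ} (hβ0 : 0 ≤ β) (hβ1 : β < 1)
    (hx : b ≤ x) (hab : a ≤ b) :
    ∫⁻ v in Icc a b, ENNReal.ofReal (|v - x| ^ (-β)) ≤
      ENNReal.ofReal ((b - a) ^ (1 - β) / (1 - β)) := by
  have hf : Measurable fun v : ℝ => ENNReal.ofReal (|v - x| ^ (-β)) := by fun_prop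
  rw [← (Measure.measurePreserving_neg volume).setLIntegral_comp_preimage measurableSet_Icc hf]
  have hpre : Neg.neg ⁻¹' Icc a b = Icc (-b) (-a) := Set.neg_Icc a b
  simp only [hpre, show ∀ v, |-v - x| = |v - -x| from fun v => by rw [← abs_neg]; ring_nf]
  simpa [sub_eq_add_neg, add_comm] using
    lintegral_Icc_rpow_neg_abs_sub_le_of_le hβ0 hβ1 (neg_le_neg hx) (neg_le_neg hab)

theorem lintegral_Icc_rpow_neg_abs_sub_le {β a b : ℝ} (x : ℝ) (hβ0 : 0 ≤ β) (hβ1 : β < 1)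
    (hab : a ≤ b) :
    ∫⁻ v in Icc a b, ENNReal.ofReal (|v - x| ^ (-β)) ≤
      ENNReal.ofReal (2 * (b - a) ^ (1 - β) / (1 - β)) := by
  have hmono : ∀ {c d}, a ≤ c → c ≤ d → d ≤ b →
      ENNReal.ofReal ((d - c) ^ (1 - β) / (1 - β)) ≤ ENNReal.ofReal ((b - a) ^ (1 - β) / (1 - β)) :=
    fun hc hcd hd => by gcongr
  rw [mul_div_assoc, two_mul, ENNReal.ofReal_add (by positivity) (by positivity)]
  rcases le_total x a with hxa | hax
  · exact (lintegral_Icc_rpow_neg_abs_sub_le_of_le hβ0 hβ1 hxa hab).trans le_self_add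
  rcases le_total b x with hbx | hxb
  · exact (lintegral_Icc_rpow_neg_abs_sub_le_of_ge hβ0 hβ1 hbx hab).trans le_self_add
  rw [← Icc_union_Icc_eq_Icc hax hxb]
  refine (lintegral_union_le _ _ _).trans (add_le_add ?_ ?_)
  · exact (lintegral_Icc_rpow_neg_abs_sub_le_of_ge hβ0 hβ1 le_rfl hax).trans (hmono le_rfl hax hxb)
  · exact (lintegral_Icc_rpow_neg_abs_sub_le_of_le hβ0 hβ1 le_rfl hxb).trans (hmono hax hxb le_rfl)

theorem lintegral_prod_rpow_inv_card_le {α ι : Type*} [MeasurableSpace α] {μ : Measure α}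
    {s : Finset ι} (hs : s.Nonempty) {f : ι → α → ℝ≥0∞} (hf : ∀ i ∈ s, AEMeasurable (f i) μ)
    {T : ℝ≥0∞} (hT : ∀ i ∈ s, ∫⁻ a, f i a ∂μ ≤ T) :
    ∫⁻ a, ∏ i ∈ s, f i a ^ (s.card : ℝ)⁻¹ ∂μ ≤ T := by
  have hcard : (s.card : ℝ) ≠ 0 := by exact_mod_cast hs.card_pos.ne'
  calc ∫⁻ a, ∏ i ∈ s, f i a ^ (s.card : ℝ)⁻¹ ∂μ
      ≤ ∏ i ∈ s, (∫⁻ a, f i a ∂μ) ^ (s.card : ℝ)⁻¹ :=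
        ENNReal.lintegral_prod_norm_pow_le s hf (by simp [hcard]) fun _ _ => by positivity
    _ ≤ ∏ _i ∈ s, T ^ (s.card : ℝ)⁻¹ :=
        Finset.prod_le_prod' fun i hi => ENNReal.rpow_le_rpow (hT i hi) (by positivity)
    _ = T := by
        rw [Finset.prod_const, ← ENNReal.rpow_natCast, ← ENNReal.rpow_mul, inv_mul_cancel₀ hcard,
          ENNReal.rpow_one]

theorem Polynomial.leadingCoeff_sub_C {R : Type*} [Ring R] {p : R[X]} (hp : 0 < p.natDegree)
    (a : R) :
    (p - C a).leadingCoeff = p.leadingCoeff :=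
  leadingCoeff_sub_of_degree_lt (degree_C_le.trans_lt (natDegree_pos_iff_degree_pos.mp hp))

theorem Polynomial.abs_leadingCoeff_mul_prod_abs_sub_re_le (q : ℝ[X]) (v : ℝ) :
    |q.leadingCoeff| * ((q.map (algebraMap ℝ ℂ)).roots.map fun z => |v - z.re|).prod ≤
      |q.eval v| := by
  set Q := q.map (algebraMap ℝ ℂ)
  have hQ : C Q.leadingCoeff * (Q.roots.map fun z => X - C z).prod = Q :=
    C_leadingCoeff_mul_prod_multiset_X_sub_C IsAlgClosed.card_roots_eq_natDegree
  have heval : ((q.eval v : ℝ) : ℂ) = Q.eval (v : ℂ) := by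
    rw [eval_map]; exact (eval₂_at_apply (algebraMap ℝ ℂ) v).symm
  have hlc : ‖Q.leadingCoeff‖ = |q.leadingCoeff| := by simp [Q]
  have hnorm (s : Multiset ℂ) : ‖s.prod‖ = (s.map (‖·‖)).prod :=
    map_multiset_prod (normHom : ℂ →*₀ ℝ) s
  rw [show |q.eval v| = ‖((q.eval v : ℝ) : ℂ)‖ from (Complex.norm_real _).symm, heval]
  conv_rhs => rw [← hQ]
  simp only [eval_mul, eval_C, eval_multiset_prod, Multiset.map_map, Function.comp_def, eval_sub,
    eval_X, norm_mul, hnorm, hlc]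
  gcongr
  exact Multiset.prod_map_le_prod_map₀ _ _ (fun _ _ => abs_nonneg _) fun z _ => by
    simpa using Complex.abs_re_le_norm ((v : ℂ) - z)

theorem lintegral_Icc_prod_rpow_neg_abs_sub_le {ι : Type*} {s : Finset ι} (hs : s.Nonempty)
    (x : ι → ℝ) {ε a b : ℝ} (hε : 0 ≤ ε) (hεs : ε * s.card < 1) (hab : a ≤ b) :
    ∫⁻ v in Icc a b, ∏ i ∈ s, ENNReal.ofReal (|v - x i| ^ (-ε)) ≤
      ENNReal.ofReal (2 * (b - a) ^ (1 - ε * s.card) / (1 - ε * s.card)) := by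
  have hcard : (s.card : ℝ) ≠ 0 := by exact_mod_cast hs.card_pos.ne'
  have hsplit (i : ι) (v : ℝ) : ENNReal.ofReal (|v - x i| ^ (-ε)) =
      ENNReal.ofReal (|v - x i| ^ (-(ε * s.card))) ^ (s.card : ℝ)⁻¹ := by
    rw [ENNReal.ofReal_rpow_of_nonneg (by positivity) (by positivity),
      ← Real.rpow_mul (abs_nonneg _), neg_mul, mul_inv_cancel_right₀ hcard]
  simp only [hsplit]
  exact lintegral_prod_rpow_inv_card_le hs (fun i _ => by fun_prop) fun i _ =>
    lintegral_Icc_rpow_neg_abs_sub_le (x i) (by positivity) hεs hab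

theorem Polynomial.lintegral_Icc_rpow_neg_abs_eval_le {q : ℝ[X]} (hq : 0 < q.natDegree) {ε a b : ℝ}
    (hε : 0 ≤ ε) (hεq : ε * q.natDegree < 1) (hab : a ≤ b) :
    ∫⁻ v in Icc a b, ENNReal.ofReal (|q.eval v| ^ (-ε)) ≤
      ENNReal.ofReal (|q.leadingCoeff| ^ (-ε)) *
        ENNReal.ofReal (2 * (b - a) ^ (1 - ε * q.natDegree) / (1 - ε * q.natDegree)) := by
  classical
  set Z := (q.map (algebraMap ℝ ℂ)).roots
  set s := Z.toEnumFinset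
  have hcard : s.card = q.natDegree := by
    rw [Multiset.card_toEnumFinset, IsAlgClosed.card_roots_eq_natDegree, natDegree_map]
  have hs : s.Nonempty := Finset.card_pos.mp (hcard ▸ hq)
  have hprod (v : ℝ) : ∏ i ∈ s, |v - i.1.re| = (Z.map fun z => |v - z.re|).prod := by
    rw [Finset.prod_eq_multiset_prod, ← Multiset.map_toEnumFinset_fst Z, Multiset.map_map]
    rfl
  have hae : ∀ᵐ v, v ∈ Icc a b → ENNReal.ofReal (|q.eval v| ^ (-ε)) ≤
      ENNReal.ofReal (|q.leadingCoeff| ^ (-ε)) * ∏ i ∈ s, ENNReal.ofReal (|v - i.1.re| ^ (-ε)) := by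
    filter_upwards [(s.image fun i => i.1.re).countable_toSet.ae_notMem volume] with v hv _
    have hpos : ∀ i ∈ s, 0 < |v - i.1.re| := fun i hi =>
      abs_pos.mpr (sub_ne_zero.mpr fun h => hv (Finset.mem_image.mpr ⟨i, hi, h.symm⟩))
    rw [← ENNReal.ofReal_prod_of_nonneg fun i _ => by positivity,
      ← ENNReal.ofReal_mul (by positivity), Real.finsetProd_rpow _ _ fun i hi => (hpos i hi).le,
      ← Real.mul_rpow (abs_nonneg _) (Finset.prod_nonneg fun i hi => (hpos i hi).le)]
    refine ENNReal.ofReal_le_ofReal (Real.rpow_le_rpow_of_nonpos ?_ ?_ (by linarith))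
    · exact mul_pos (abs_pos.mpr (leadingCoeff_ne_zero.mpr (ne_zero_of_natDegree_gt hq)))
        (Finset.prod_pos hpos)
    · rw [hprod]; exact q.abs_leadingCoeff_mul_prod_abs_sub_re_le v
  calc ∫⁻ v in Icc a b, ENNReal.ofReal (|q.eval v| ^ (-ε))
      ≤ ∫⁻ v in Icc a b, ENNReal.ofReal (|q.leadingCoeff| ^ (-ε)) *
          ∏ i ∈ s, ENNReal.ofReal (|v - i.1.re| ^ (-ε)) :=
        setLIntegral_mono_ae' measurableSet_Icc hae
    _ ≤ _ := by
      rw [lintegral_const_mul' _ _ ENNReal.ofReal_ne_top, ← hcard]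
      gcongr
      exact lintegral_Icc_prod_rpow_neg_abs_sub_le hs _ hε (hcard ▸ hεq) hab

theorem Polynomial.lintegral_Icc_rpow_neg_abs_eval_sub_le {p : ℝ[X]} (hp : 0 < p.natDegree)
    {ε : ℝ} (hε : 0 ≤ ε) (hεp : ε * p.natDegree < 1) (u : ℝ) (j : ℕ) :
    ∫⁻ v in Icc (u - 2 ^ ((j:ℤ) - 1)) (u + 2 ^ ((j:ℤ) - 1)),
        ENNReal.ofReal (|p.eval v - p.eval u| ^ (-ε)) ≤
      ENNReal.ofReal (|p.leadingCoeff| ^ (-ε) * (2 * 2 ^ j / (1 - ε * p.natDegree))) := by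
  have hlen : u + 2 ^ ((j:ℤ) - 1) - (u - 2 ^ ((j:ℤ) - 1)) = (2:ℝ) ^ j := by
    rw [add_sub_sub_cancel, ← two_mul, zpow_sub₀ two_ne_zero, zpow_one, zpow_natCast]
    field_simp
  have hpow : ((2:ℝ) ^ j) ^ (1 - ε * p.natDegree) ≤ 2 ^ j := by
    simpa using Real.rpow_le_rpow_of_exponent_le (one_le_pow₀ one_le_two)
      (by nlinarith : 1 - ε * p.natDegree ≤ 1)
  have h := lintegral_Icc_rpow_neg_abs_eval_le (q := p - C (p.eval u))
    (a := u - 2 ^ ((j:ℤ) - 1)) (b := u + 2 ^ ((j:ℤ) - 1)) (by rwa [natDegree_sub_C]) hε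
    (by rwa [natDegree_sub_C]) (by linarith [hlen, pow_pos (two_pos (α := ℝ)) j])
  simp only [eval_sub, eval_C, natDegree_sub_C, leadingCoeff_sub_C hp, hlen] at h
  rw [ENNReal.ofReal_mul (by positivity)]
  grw [h]
  gcongr

theorem min_one_rpow_neg_le {X s t : ℝ} (hX : 0 < X) (hs : 0 ≤ s) (hst : s ≤ t) :
    min 1 (X ^ (-t)) ≤ X ^ (-s) := by
  rcases le_total 1 X with h | h
  · exact (min_le_right _ _).trans (Real.rpow_le_rpow_of_exponent_le h (neg_le_neg hst))
  · exact (min_le_left _ _).trans (Real.one_le_rpow_of_pos_of_le_one_of_nonpos hX h (by linarith))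

noncomputable def kernelMajorant (C : ℝ) (m j : ℕ) (p : ℝ[X]) (u v : ℝ) : ℝ :=
  C * (2:ℝ)^(-(j:ℤ)) *
    (if p.eval v = p.eval u then 1
      else min 1 (((2:ℝ)^(j*m) * |p.eval v - p.eval u|) ^ (-(1/(m:ℝ))))) *
    (if |v - u| ≤ (2:ℝ)^((j:ℤ)-1) then 1 else 0)

theorem ae_ofReal_kernelMajorant_le {m j : ℕ} (hm : 0 < m) {δ C : ℝ} (hδ : 0 ≤ δ) (hδ1 : δ ≤ 1)
    (hC : 0 ≤ C) {p : ℝ[X]} (hp : 0 < p.natDegree) (u : ℝ) :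
    ∀ᵐ v, ENNReal.ofReal (kernelMajorant C m j p u v) ≤
      (Icc (u - 2 ^ ((j:ℤ) - 1)) (u + 2 ^ ((j:ℤ) - 1))).indicator (fun v =>
        ENNReal.ofReal (C * 2 ^ (-(j:ℝ) * δ) / 2 ^ j) *
          ENNReal.ofReal (|p.eval v - p.eval u| ^ (-(δ / m)))) v := by
  have hm' : (0:ℝ) < m := by exact_mod_cast hm
  have hq : p - Polynomial.C (p.eval u) ≠ 0 :=
    ne_zero_of_natDegree_gt (n := 0) (by rwa [natDegree_sub_C])
  filter_upwards [(finite_setOfPred_isRoot hq).countable.ae_notMem volume] with v hv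
  have hne : p.eval v - p.eval u ≠ 0 := by simpa using hv
  rw [kernelMajorant, if_neg (sub_ne_zero.mp hne)]
  by_cases hvu : |v - u| ≤ 2 ^ ((j:ℤ) - 1)
  · have hmem : v ∈ Icc (u - 2 ^ ((j:ℤ) - 1)) (u + 2 ^ ((j:ℤ) - 1)) := by
      constructor <;> linarith [abs_le.mp hvu]
    rw [if_pos hvu, mul_one, indicator_of_mem hmem, ← ENNReal.ofReal_mul (by positivity)]
    refine ENNReal.ofReal_le_ofReal ?_
    have hX : 0 < (2:ℝ) ^ (j * m) * |p.eval v - p.eval u| := by positivity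
    have hrescale : ((2:ℝ) ^ (j * m) * |p.eval v - p.eval u|) ^ (-(δ / m)) =
        2 ^ (-(j:ℝ) * δ) * |p.eval v - p.eval u| ^ (-(δ / m)) := by
      rw [Real.mul_rpow (by positivity) (abs_nonneg _), ← Real.rpow_natCast,
        ← Real.rpow_mul zero_le_two]
      congr 2
      push_cast
      field_simp
    calc C * 2 ^ (-(j:ℤ)) * min 1 (((2:ℝ) ^ (j * m) * |p.eval v - p.eval u|) ^ (-(1 / (m:ℝ))))
        ≤ C * 2 ^ (-(j:ℤ)) * ((2:ℝ) ^ (j * m) * |p.eval v - p.eval u|) ^ (-(δ / m)) := by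
          gcongr
          exact min_one_rpow_neg_le hX (by positivity) (by gcongr)
      _ = _ := by rw [hrescale, zpow_neg, zpow_natCast]; ring
  · rw [if_neg hvu, mul_zero, ENNReal.ofReal_zero]
    exact bot_le

/-- Schur-type integral bound for the kernel `𝒦` with the interpolated bound
`|𝒦(u,v)| ≤ C 2^{-j} min{1, (2^{jm}|p(v)-p(u)|)^{-1/m}} χ_{[0,2^{j-1}]}(|v-u|)`:
for `δ ∈ (0,1]` with `δ/m < 1/l`,
`sup_u ∫ |𝒦(u,v)| dv ≤ C' 2^{-jδ} |c_l|^{-δ/m}`, with `C'` independent of `j`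
and of the lower-order coefficients of `p`. -/
theorem stmt15 (m l : ℕ) (hm : 1 ≤ m) (hl : 1 ≤ l) (δ C : ℝ)
    (hδ : 0 < δ) (hδ1 : δ ≤ 1) (hδml : δ / m < 1 / l) (hC : 0 ≤ C) :
    ∃ C' : ℝ, 0 < C' ∧
      ∀ (j : ℕ) (p : Polynomial ℝ), p.natDegree = l → p.leadingCoeff ≠ 0 →
      ∀ K : ℝ → ℝ → ℂ, (∀ u, Measurable fun v => K u v) →
        (∀ u v : ℝ, ‖K u v‖
          ≤ C * (2:ℝ)^(-(j:ℤ)) *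
            (if p.eval v = p.eval u then 1
              else min 1 (((2:ℝ)^(j*m) * |p.eval v - p.eval u|) ^ (-(1/(m:ℝ))))) *
            (if |v - u| ≤ (2:ℝ)^((j:ℤ)-1) then 1 else 0)) →
      ∀ u : ℝ,
        (∫⁻ v : ℝ, (‖K u v‖₊ : ℝ≥0∞))
          ≤ ENNReal.ofReal (C' * (2:ℝ) ^ (-(j:ℝ) * δ) * |p.leadingCoeff| ^ (-(δ/m))) := by
  have hεl : δ / m * l < 1 := (lt_div_iff₀ (by exact_mod_cast hl)).mp hδml
  have hd : 0 < 1 - δ / m * l := sub_pos.mpr hεl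
  refine ⟨2 * C / (1 - δ / m * l) + 1, by positivity, ?_⟩
  intro j p hp _ K _ hK u
  have hp0 : 0 < p.natDegree := hp ▸ hl
  calc ∫⁻ v, (‖K u v‖₊ : ℝ≥0∞)
      ≤ ∫⁻ v, (Icc (u - 2 ^ ((j:ℤ) - 1)) (u + 2 ^ ((j:ℤ) - 1))).indicator (fun v =>
          ENNReal.ofReal (C * 2 ^ (-(j:ℝ) * δ) / 2 ^ j) *
            ENNReal.ofReal (|p.eval v - p.eval u| ^ (-(δ / m)))) v :=
        lintegral_mono_ae <| (ae_ofReal_kernelMajorant_le (by omega) hδ.le hδ1 hC hp0 u).mono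
          fun v hv => (ofReal_norm (K u v) ▸ ENNReal.ofReal_le_ofReal (hK u v)).trans hv
    _ = ENNReal.ofReal (C * 2 ^ (-(j:ℝ) * δ) / 2 ^ j) *
          ∫⁻ v in Icc (u - 2 ^ ((j:ℤ) - 1)) (u + 2 ^ ((j:ℤ) - 1)),
            ENNReal.ofReal (|p.eval v - p.eval u| ^ (-(δ / m))) := by
        rw [lintegral_indicator measurableSet_Icc, lintegral_const_mul' _ _ ENNReal.ofReal_ne_top]
    _ ≤ _ := by
        grw [lintegral_Icc_rpow_neg_abs_eval_sub_le hp0 (by positivity) (hp ▸ hεl),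
          ← ENNReal.ofReal_mul (by positivity), hp]
        refine ENNReal.ofReal_le_ofReal ?_
        calc _ = 2 * C / (1 - δ / m * l) * 2 ^ (-(j:ℝ) * δ) * |p.leadingCoeff| ^ (-(δ / m)) := by
              field_simp
          _ ≤ _ := by gcongr; linarith
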